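/- Define a decreasing filtration of (A // A(1))_* by F^j (A // A(1))_* := τ^{-1}((⊕_{k ≥ j} M_2(k)) ⊗ (A(2) // A(1))_*). Then each F^j (A // A(1))_* is an A(2)_*-subcomodule, i.e., the A(2)_*-coaction preserves or raises this filtration. -/

import Mathlib

open TensorProduct

/-- The mod 2 dual Steenrod algebra on the conjugate generators:
`MvPolynomial.X k` represents `ξ̄_{k+1}`. -/
abbrev DualSteenrod : Type := MvPolynomial ℕ (ZMod 2)

/-- `xb k = ξ̄_k`, with `ξ̄_0 = 1`. -/
noncomputable def xb : ℕ → DualSteenrod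
  | 0 => 1
  | k + 1 => MvPolynomial.X k

/-- The coproduct: `ψ(ξ̄_k) = Σ_{k₁+k₂=k} ξ̄_{k₁} ⊗ ξ̄_{k₂}^{2^{k₁}}`. -/
noncomputable def psi : DualSteenrod →ₐ[ZMod 2] DualSteenrod ⊗[ZMod 2] DualSteenrod :=
  MvPolynomial.aeval fun n =>
    ∑ p ∈ Finset.range (n + 2), (xb p) ⊗ₜ[ZMod 2] ((xb (n + 1 - p)) ^ (2 ^ p))

/-- The ideal cutting out `A(2)_*`. -/
noncomputable def steenrodIdeal2 : Ideal DualSteenrod :=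
  Ideal.span (Set.range fun k : ℕ => (MvPolynomial.X k : DualSteenrod) ^ (2 ^ (3 - k)))

abbrev A2 : Type := DualSteenrod ⧸ steenrodIdeal2

/-- The left `A(2)_*`-coaction on `A_*` (restricting to `(A ⫽ A(1))_*`). -/
noncomputable def coactA2 : DualSteenrod →ₐ[ZMod 2] A2 ⊗[ZMod 2] DualSteenrod :=
  (Algebra.TensorProduct.map (Ideal.Quotient.mkₐ (ZMod 2) steenrodIdeal2)
    (AlgHom.id (ZMod 2) DualSteenrod)).comp psi

/-- Brown-Gitler weight: `ξ̄_{k+1}` has weight `2^k`. -/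
def bgWeight (d : ℕ →₀ ℕ) : ℕ := d.sum fun k e => e * 2 ^ k

/-- Exterior residue `(4ε₁, 2ε₂, ε₃, 0, …)` of an exponent. -/
noncomputable def dLow (d : ℕ →₀ ℕ) : ℕ →₀ ℕ :=
  Finsupp.single 0 (d 0 % 8) + Finsupp.single 1 (d 1 % 4) + Finsupp.single 2 (d 2 % 2)

/-- 2-divisible part `(8i₁, 4i₂, 2i₃, i₄, …)` of an exponent. -/
noncomputable def dHigh (d : ℕ →₀ ℕ) : ℕ →₀ ℕ := d - dLow d

/-- The monomial-splitting map `τ`. -/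
noncomputable def tau : DualSteenrod →ₗ[ZMod 2] DualSteenrod ⊗[ZMod 2] DualSteenrod :=
  (MvPolynomial.basisMonomials ℕ (ZMod 2)).constr (ZMod 2) fun d =>
    (MvPolynomial.monomial (dHigh d) 1) ⊗ₜ[ZMod 2] (MvPolynomial.monomial (dLow d) 1)

def isAA1 (d : ℕ →₀ ℕ) : Prop := 4 ∣ d 0 ∧ 2 ∣ d 1

def isAA2 (d : ℕ →₀ ℕ) : Prop := 8 ∣ d 0 ∧ 4 ∣ d 1 ∧ 2 ∣ d 2

def isExtMono (d : ℕ →₀ ℕ) : Prop :=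
  (d 0 = 0 ∨ d 0 = 4) ∧ (d 1 = 0 ∨ d 1 = 2) ∧ d 2 ≤ 1 ∧ ∀ k, 3 ≤ k → d k = 0

/-- `(A ⫽ A(1))_*` as the span of its monomials. -/
noncomputable def VAA1 : Submodule (ZMod 2) DualSteenrod :=
  Submodule.span (ZMod 2) {m | ∃ d, isAA1 d ∧ m = MvPolynomial.monomial d 1}

/-- `(⊕_{k ≥ j} M₂(k)) ⊗ (A(2) ⫽ A(1))_*`: span of basis tensors whose left factor
has Brown-Gitler weight at least `8j`. -/
noncomputable def Wge (j : ℕ) : Submodule (ZMod 2) (DualSteenrod ⊗[ZMod 2] DualSteenrod) :=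
  Submodule.span (ZMod 2)
    {t | ∃ a b : ℕ →₀ ℕ, isAA2 a ∧ 8 * j ≤ bgWeight a ∧ isExtMono b ∧
      t = (MvPolynomial.monomial a 1) ⊗ₜ[ZMod 2] (MvPolynomial.monomial b 1)}

/-- The decreasing filtration
`F^j (A ⫽ A(1))_* = τ⁻¹((⊕_{k ≥ j} M₂(k)) ⊗ (A(2) ⫽ A(1))_*)`. -/
noncomputable def Filt (j : ℕ) : Submodule (ZMod 2) DualSteenrod :=
  VAA1 ⊓ Submodule.comap tau (Wge j)

/-!
The weight `highWeight d` of a monomial `ξ̄^d` of `(A ⫽ A(1))_*` is the Brown-Gitler weight of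
its `(A ⫽ A(2))_*`-factor under `τ`; since `τ` sends distinct monomials to distinct basis
tensors, `F^j` is spanned by the monomials of weight `≥ 8j`. The weight is superadditive, so
`A(2)_* ⊗ (monomials of weight ≥ w)` is a multiplicative filtration and it suffices to treat
the powers `ξ̄_{k+1}^{2^m}`. In characteristic 2 the coaction sends such a power to
`Σ_p ξ̄_p^{2^m} ⊗ ξ̄_{k+1-p}^{2^{p+m}}`; the weight of `ξ̄_{i+1}^{2^n}` depends only on `i + n`,
so every right-hand factor has the weight of `ξ̄_{k+1}^{2^m}`, except in the term
`ξ̄_{k+1}^{2^m} ⊗ 1`, which vanishes in `A(2)_*` exactly when that weight is positive.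
-/

open MvPolynomial

lemma bgWeight_add (d e : ℕ →₀ ℕ) : bgWeight (d + e) = bgWeight d + bgWeight e :=
  Finsupp.sum_add_index' (fun _ => zero_mul _) (fun _ _ _ => add_mul _ _ _)

lemma bgWeight_mono {d e : ℕ →₀ ℕ} (h : d ≤ e) : bgWeight d ≤ bgWeight e := by
  obtain ⟨c, rfl⟩ := exists_add_of_le h
  rw [bgWeight_add]
  exact Nat.le_add_right _ _

lemma bgWeight_of_support_subset {d : ℕ →₀ ℕ} {s : Finset ℕ} (h : d.support ⊆ s) :
    bgWeight d = ∑ k ∈ s, d k * 2 ^ k :=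
  Finsupp.sum_of_support_subset d h _ fun _ _ => zero_mul _

lemma isAA1_iff {d : ℕ →₀ ℕ} : isAA1 d ↔ ∀ k, 2 ^ (2 - k) ∣ d k := by
  refine ⟨fun ⟨h0, h1⟩ k => ?_, fun h => ⟨h 0, h 1⟩⟩
  rcases k with _ | _ | k
  exacts [h0, h1, by simp]

lemma dLow_apply (d : ℕ →₀ ℕ) (k : ℕ) : dLow d k = d k % 2 ^ (3 - k) := by
  rcases k with _ | _ | _ | k <;> simp [dLow, Nat.mod_one]

lemma dHigh_apply (d : ℕ →₀ ℕ) (k : ℕ) : dHigh d k = 2 ^ (3 - k) * (d k / 2 ^ (3 - k)) := by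
  rw [dHigh, Finsupp.tsub_apply, dLow_apply]
  exact Nat.sub_eq_of_eq_add (Nat.div_add_mod _ _).symm

lemma dHigh_add_dLow (d : ℕ →₀ ℕ) : dHigh d + dLow d = d := by
  ext k
  rw [Finsupp.add_apply, dHigh_apply, dLow_apply, Nat.div_add_mod]

lemma dHigh_add_le (d e : ℕ →₀ ℕ) : dHigh d + dHigh e ≤ dHigh (d + e) := fun k => by
  simp only [Finsupp.add_apply, dHigh_apply, ← mul_add]
  exact Nat.mul_le_mul_left _ Nat.div_add_div_le_add_div

lemma support_dHigh_subset (d : ℕ →₀ ℕ) : (dHigh d).support ⊆ d.support :=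
  Finsupp.support_tsub

lemma isAA2_dHigh (d : ℕ →₀ ℕ) : isAA2 (dHigh d) := by
  simp only [isAA2, dHigh_apply]
  exact ⟨dvd_mul_right _ _, dvd_mul_right _ _, dvd_mul_right _ _⟩

lemma isExtMono_dLow {d : ℕ →₀ ℕ} (hd : isAA1 d) : isExtMono (dLow d) := by
  obtain ⟨h0, h1⟩ := hd
  simp only [isExtMono, dLow_apply]
  refine ⟨by omega, by omega, by omega, fun k hk => ?_⟩
  rw [Nat.sub_eq_zero_of_le hk, pow_zero, Nat.mod_one]

noncomputable def highWeight (d : ℕ →₀ ℕ) : ℕ := bgWeight (dHigh d)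

lemma highWeight_add_le (d e : ℕ →₀ ℕ) : highWeight d + highWeight e ≤ highWeight (d + e) := by
  rw [highWeight, highWeight, ← bgWeight_add]
  exact bgWeight_mono (dHigh_add_le d e)

lemma highWeight_single (k e : ℕ) :
    highWeight (Finsupp.single k e) = 2 ^ (3 - k) * (e / 2 ^ (3 - k)) * 2 ^ k := by
  rw [highWeight, bgWeight_of_support_subset
    ((support_dHigh_subset _).trans Finsupp.support_single_subset), Finset.sum_singleton,
    dHigh_apply, Finsupp.single_eq_same]

lemma highWeight_eq_sum (d : ℕ →₀ ℕ) :
    highWeight d = d.sum fun k e => highWeight (Finsupp.single k e) := by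
  rw [highWeight, bgWeight_of_support_subset (support_dHigh_subset d)]
  exact Finset.sum_congr rfl fun k _ => by rw [dHigh_apply]; exact (highWeight_single k (d k)).symm

lemma highWeight_single_two_pow (i n : ℕ) :
    highWeight (Finsupp.single i (2 ^ n)) = if 3 ≤ i + n then 2 ^ (i + n) else 0 := by
  rw [highWeight_single]
  split_ifs with h
  · rw [Nat.mul_div_cancel' (pow_dvd_pow 2 (by omega)), ← pow_add, add_comm]
  · rw [Nat.div_eq_of_lt (Nat.pow_lt_pow_right (by norm_num) (by omega)), mul_zero, zero_mul]

lemma isAA1_single_two_pow {i n : ℕ} (h : 2 ≤ i + n) : isAA1 (Finsupp.single i (2 ^ n)) :=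
  isAA1_iff.2 fun k => by
    rw [Finsupp.single_apply]
    split_ifs with hik
    · exact pow_dvd_pow 2 (by omega)
    · exact dvd_zero _

-- Without this instance, search fails to find `LeftDistribClass (A2 ⊗[ZMod 2] DualSteenrod)`.
noncomputable instance : CommRing (A2 ⊗[ZMod 2] DualSteenrod) := Algebra.TensorProduct.instCommRing

noncomputable def coFilt (w : ℕ) : Submodule (ZMod 2) (A2 ⊗[ZMod 2] DualSteenrod) :=
  Submodule.span (ZMod 2) {t | ∃ (q : A2) (e : ℕ →₀ ℕ), isAA1 e ∧ w ≤ highWeight e ∧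
    t = q ⊗ₜ[ZMod 2] monomial e 1}

lemma tmul_monomial_mem_coFilt {w : ℕ} (q : A2) {e : ℕ →₀ ℕ} (he : isAA1 e)
    (hw : w ≤ highWeight e) : q ⊗ₜ[ZMod 2] (monomial e 1 : DualSteenrod) ∈ coFilt w :=
  Submodule.subset_span ⟨q, e, he, hw, rfl⟩

lemma tmul_one_mem_coFilt_zero (q : A2) : q ⊗ₜ[ZMod 2] (1 : DualSteenrod) ∈ coFilt 0 :=
  tmul_monomial_mem_coFilt q (e := 0) ⟨dvd_zero _, dvd_zero _⟩ (Nat.zero_le _)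

lemma coFilt_antitone {a b : ℕ} (h : a ≤ b) : coFilt b ≤ coFilt a :=
  Submodule.span_mono fun _ ⟨q, e, he, hw, ht⟩ => ⟨q, e, he, h.trans hw, ht⟩

lemma tmul_monomial_mul_mem_coFilt {a b : ℕ} (q r : A2) {d e : ℕ →₀ ℕ} (hd : isAA1 d)
    (he : isAA1 e) (hwd : a ≤ highWeight d) (hwe : b ≤ highWeight e) :
    (q ⊗ₜ[ZMod 2] monomial d 1) * (r ⊗ₜ[ZMod 2] monomial e 1) ∈ coFilt (a + b) := by
  rw [Algebra.TensorProduct.tmul_mul_tmul, monomial_mul, one_mul]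
  refine tmul_monomial_mem_coFilt _ ?_ ((add_le_add hwd hwe).trans (highWeight_add_le d e))
  exact isAA1_iff.2 fun k => dvd_add (isAA1_iff.1 hd k) (isAA1_iff.1 he k)

lemma mul_mem_coFilt {a b : ℕ} {x y : A2 ⊗[ZMod 2] DualSteenrod} (hx : x ∈ coFilt a)
    (hy : y ∈ coFilt b) : x * y ∈ coFilt (a + b) := by
  induction hx using Submodule.span_induction with
  | mem _ hx =>
    obtain ⟨q, d, hd, hwd, rfl⟩ := hx
    induction hy using Submodule.span_induction with
    | mem _ hy =>
      obtain ⟨r, e, he, hwe, rfl⟩ := hy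
      exact tmul_monomial_mul_mem_coFilt q r hd he hwd hwe
    | zero => simp
    | add _ _ _ _ h₁ h₂ => rw [mul_add]; exact add_mem h₁ h₂
    | smul c _ _ h => rw [mul_smul_comm]; exact Submodule.smul_mem _ c h
  | zero => simp
  | add _ _ _ _ h₁ h₂ => rw [add_mul]; exact add_mem h₁ h₂
  | smul c _ _ h => rw [smul_mul_assoc]; exact Submodule.smul_mem _ c h

lemma one_mem_coFilt_zero : (1 : A2 ⊗[ZMod 2] DualSteenrod) ∈ coFilt 0 :=
  tmul_one_mem_coFilt_zero 1

lemma pow_mem_coFilt {a : ℕ} {x : A2 ⊗[ZMod 2] DualSteenrod} (hx : x ∈ coFilt a) (n : ℕ) :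
    x ^ n ∈ coFilt (n * a) := by
  induction n with
  | zero => simpa using one_mem_coFilt_zero
  | succ n ih => simpa [pow_succ, add_mul] using mul_mem_coFilt ih hx

lemma prod_mem_coFilt {ι : Type*} (s : Finset ι) {f : ι → A2 ⊗[ZMod 2] DualSteenrod}
    {w : ι → ℕ} (h : ∀ i ∈ s, f i ∈ coFilt (w i)) : ∏ i ∈ s, f i ∈ coFilt (∑ i ∈ s, w i) := by
  classical
  induction s using Finset.induction_on with
  | empty => simpa using one_mem_coFilt_zero
  | insert i s hi ih =>
    rw [Finset.prod_insert hi, Finset.sum_insert hi]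
    exact mul_mem_coFilt (h i (Finset.mem_insert_self i s))
      (ih fun k hk => h k (Finset.mem_insert_of_mem hk))

noncomputable def counitA2 : A2 →ₐ[ZMod 2] ZMod 2 :=
  Ideal.Quotient.liftₐ steenrodIdeal2 (aeval 0 : DualSteenrod →ₐ[ZMod 2] ZMod 2) fun _ ha => by
    refine (Ideal.span_le (I := RingHom.ker (aeval 0 : DualSteenrod →ₐ[ZMod 2] ZMod 2))).2 ?_ ha
    rintro _ ⟨k, rfl⟩
    simp

instance : Nontrivial (A2 ⊗[ZMod 2] DualSteenrod) :=
  (Algebra.TensorProduct.lift counitA2 (aeval 0 : DualSteenrod →ₐ[ZMod 2] ZMod 2)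
    fun _ _ => .all _ _).toRingHom.domain_nontrivial

instance : CharP (A2 ⊗[ZMod 2] DualSteenrod) 2 :=
  charP_of_injective_algebraMap (algebraMap (ZMod 2) _).injective 2

lemma coactA2_X (k : ℕ) : coactA2 (X k) = ∑ p ∈ Finset.range (k + 2),
    Ideal.Quotient.mk steenrodIdeal2 (xb p) ⊗ₜ[ZMod 2] (xb (k + 1 - p) ^ 2 ^ p) := by
  simp [coactA2, psi, map_sum]

lemma X_pow_two_pow_mem_steenrodIdeal2 {k m : ℕ} (h : 3 ≤ k + m) :
    (X k : DualSteenrod) ^ 2 ^ m ∈ steenrodIdeal2 :=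
  Ideal.mem_of_dvd _ (pow_dvd_pow _ (Nat.pow_le_pow_right two_pos (by omega)))
    (Ideal.subset_span ⟨k, rfl⟩)

theorem coactA2_X_pow_two_pow_mem (k m : ℕ) (h : 2 ≤ k + m) :
    coactA2 (X k ^ 2 ^ m) ∈ coFilt (highWeight (Finsupp.single k (2 ^ m))) := by
  rw [map_pow, coactA2_X, sum_pow_char_pow]
  refine Submodule.sum_mem _ fun p hp => ?_
  rw [Algebra.TensorProduct.tmul_pow, ← pow_mul, ← pow_add]
  rcases Nat.lt_or_ge p (k + 1) with hpk | hpk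
  · rw [show k + 1 - p = k - p + 1 by omega]
    change _ ⊗ₜ[ZMod 2] (X (k - p) ^ _) ∈ _
    rw [X_pow_eq_monomial]
    refine tmul_monomial_mem_coFilt _ (isAA1_single_two_pow (by omega)) (le_of_eq ?_)
    rw [highWeight_single_two_pow, highWeight_single_two_pow, show k - p + (p + m) = k + m by omega]
  · obtain rfl : p = k + 1 := by have := Finset.mem_range.1 hp; omega
    rw [Nat.sub_self, show xb (k + 1) = X k from rfl, xb, one_pow, ← map_pow]
    by_cases h3 : 3 ≤ k + m
    · rw [Ideal.Quotient.eq_zero_iff_mem.2 (X_pow_two_pow_mem_steenrodIdeal2 h3),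
        TensorProduct.zero_tmul]
      exact zero_mem _
    · rw [highWeight_single_two_pow, if_neg h3]
      exact tmul_one_mem_coFilt_zero _

theorem coactA2_X_pow_mem {k e : ℕ} (he : 2 ^ (2 - k) ∣ e) :
    coactA2 (X k ^ e) ∈ coFilt (highWeight (Finsupp.single k e)) := by
  obtain ⟨s, hs⟩ : 2 ^ (2 - k) ∣ e % 2 ^ (3 - k) :=
    (Nat.dvd_mod_iff (pow_dvd_pow 2 (by omega))).2 he
  have hsplit : (X k : DualSteenrod) ^ e =
      (X k ^ 2 ^ (3 - k)) ^ (e / 2 ^ (3 - k)) * (X k ^ 2 ^ (2 - k)) ^ s := by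
    rw [← pow_mul, ← pow_mul, ← pow_add, ← hs, Nat.div_add_mod]
  have hhigh := pow_mem_coFilt (coactA2_X_pow_two_pow_mem k (3 - k) (by omega)) (e / 2 ^ (3 - k))
  have hlow := pow_mem_coFilt (coactA2_X_pow_two_pow_mem k (2 - k) (by omega)) s
  rw [hsplit, map_mul, map_pow _ (X k ^ 2 ^ (3 - k)), map_pow _ (X k ^ 2 ^ (2 - k))]
  convert mul_mem_coFilt hhigh (coFilt_antitone (Nat.zero_le _) hlow) using 2
  rw [add_zero, highWeight_single, highWeight_single_two_pow, if_pos (by omega), pow_add]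
  ring

theorem coactA2_monomial_mem {d : ℕ →₀ ℕ} (hd : isAA1 d) :
    coactA2 (monomial d 1) ∈ coFilt (highWeight d) := by
  rw [monomial_eq, C_1, one_mul, highWeight_eq_sum, Finsupp.prod, map_prod]
  exact prod_mem_coFilt _ fun k _ => coactA2_X_pow_mem (isAA1_iff.1 hd k)

section Splitting

local notation "𝔅" => basisMonomials ℕ (ZMod 2)

lemma dHigh_dLow_injective : Function.Injective fun d => (dHigh d, dLow d) := fun d e h => by
  simp only [Prod.mk.injEq] at h
  rw [← dHigh_add_dLow d, ← dHigh_add_dLow e, h.1, h.2]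

lemma tau_basisMonomials (d : ℕ →₀ ℕ) : tau (𝔅 d) = (𝔅).tensorProduct 𝔅 (dHigh d, dLow d) := by
  rw [Module.Basis.tensorProduct_apply]
  exact (𝔅).constr_basis (ZMod 2) _ d

lemma tau_monomial (d : ℕ →₀ ℕ) :
    tau (monomial d 1) = monomial (dHigh d) 1 ⊗ₜ[ZMod 2] monomial (dLow d) 1 := by
  simpa only [Module.Basis.tensorProduct_apply, coe_basisMonomials] using tau_basisMonomials d

lemma repr_tau (x : DualSteenrod) :
    ((𝔅).tensorProduct 𝔅).repr (tau x) = ((𝔅).repr x).mapDomain fun d => (dHigh d, dLow d) := by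
  have h : ((𝔅).tensorProduct 𝔅).repr.toLinearMap ∘ₗ tau =
      Finsupp.lmapDomain (ZMod 2) (ZMod 2) (fun d => (dHigh d, dLow d)) ∘ₗ (𝔅).repr.toLinearMap :=
    (𝔅).ext fun d => by
      simp only [LinearMap.coe_comp, Function.comp_apply, LinearEquiv.coe_coe, tau_basisMonomials,
        Module.Basis.repr_self, Finsupp.lmapDomain_apply, Finsupp.mapDomain_single]
  exact LinearMap.congr_fun h x

lemma VAA1_eq_span : VAA1 = Submodule.span (ZMod 2) (𝔅 '' {d | isAA1 d}) := by
  rw [VAA1, coe_basisMonomials]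
  congr 1
  ext
  simp [eq_comm]

lemma Wge_eq_span (j : ℕ) : Wge j = Submodule.span (ZMod 2) ((𝔅).tensorProduct 𝔅 ''
    {p | isAA2 p.1 ∧ 8 * j ≤ bgWeight p.1 ∧ isExtMono p.2}) := by
  rw [Wge]
  congr 1
  ext
  simp [coe_basisMonomials, eq_comm, and_assoc]

lemma Filt_le_span_monomial (j : ℕ) : Filt j ≤ Submodule.span (ZMod 2)
    ((monomial · 1) '' {d | isAA1 d ∧ 8 * j ≤ highWeight d}) := by
  intro x hx
  obtain ⟨hV, hW⟩ := Submodule.mem_inf.1 hx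
  rw [VAA1_eq_span, Module.Basis.mem_span_image] at hV
  rw [Submodule.mem_comap, Wge_eq_span, Module.Basis.mem_span_image,
    repr_tau] at hW
  rw [← coe_basisMonomials, Module.Basis.mem_span_image]
  intro d hd
  have hτ : (dHigh d, dLow d) ∈ (((𝔅).repr x).mapDomain fun d => (dHigh d, dLow d)).support := by
    rw [Finsupp.mem_support_iff, Finsupp.mapDomain_apply dHigh_dLow_injective]
    exact Finsupp.mem_support_iff.1 hd
  exact ⟨hV hd, (hW hτ).2.1⟩

lemma monomial_mem_Filt {j : ℕ} {d : ℕ →₀ ℕ} (hd : isAA1 d) (hw : 8 * j ≤ highWeight d) :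
    monomial d 1 ∈ Filt j := by
  refine ⟨Submodule.subset_span ⟨d, hd, rfl⟩, ?_⟩
  rw [SetLike.mem_coe, Submodule.mem_comap, tau_monomial]
  exact Submodule.subset_span ⟨dHigh d, dLow d, isAA2_dHigh d, hw, isExtMono_dLow hd, rfl⟩

end Splitting

/-- each `F^j (A ⫽ A(1))_*` is an `A(2)_*`-subcomodule of
`(A ⫽ A(1))_*`: the `A(2)_*`-coaction preserves (or raises) the filtration. -/
theorem stmt11 (j : ℕ) (x : DualSteenrod) (hx : x ∈ Filt j) :
    coactA2 x ∈ Submodule.span (ZMod 2)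
      {t : A2 ⊗[ZMod 2] DualSteenrod | ∃ q : A2, ∃ y ∈ Filt j, t = q ⊗ₜ[ZMod 2] y} := by
  have hmono : Submodule.span (ZMod 2)
      ((monomial · 1) '' {d | isAA1 d ∧ 8 * j ≤ highWeight d}) ≤
        (coFilt (8 * j)).comap coactA2.toLinearMap := by
    refine Submodule.span_le.2 ?_
    rintro _ ⟨d, ⟨hd, hw⟩, rfl⟩
    exact coFilt_antitone hw (coactA2_monomial_mem hd)
  have hcoact : coactA2 x ∈ coFilt (8 * j) := hmono (Filt_le_span_monomial j hx)
  refine Submodule.span_le.2 ?_ hcoact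
  rintro _ ⟨q, d, hd, hw, rfl⟩
  exact Submodule.subset_span ⟨q, _, monomial_mem_Filt hd hw, rfl⟩
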